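/- arXiv:1407.7045 — 2 statements merged into one kernel-verified Lean document; each statement's English description precedes it below -/
import Mathlib

section
/- Let p₁, p₂, p₃ ∈ 𝐇 be linearly independent, and for each unordered pair {i,j} let c_ij = c_ji ∈ 𝐇 ∩ span(p_i, p_j) be an edge center; write cosh d_ij := −p_i ∗ c_ij and cosh d_ji := −p_j ∗ c_ij. Then there exists a nonzero vector c ∈ ℝ³ satisfying c ∗ ((c₁₂ ∗ p₁)p₂ − (c₁₂ ∗ p₂)p₁) = 0, c ∗ ((c₂₃ ∗ p₂)p₃ − (c₂₃ ∗ p₃)p₂) = 0, and c ∗ ((c₃₁ ∗ p₃)p₁ − (c₃₁ ∗ p₁)p₃) = 0 (i.e., the three perpendiculars to the edges through the edge centers meet, in the extended sense, at a single point) if and only if (p₁ ∗ c₁₂)(p₂ ∗ c₂₃)(p₃ ∗ c₃₁) = (p₁ ∗ c₃₁)(p₂ ∗ c₁₂)(p₃ ∗ c₂₃), equivalently if and only if cosh d₁₂ cosh d₂₃ cosh d₃₁ = cosh d₂₁ cosh d₃₂ cosh d₁₃. -/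
noncomputable section

/-- The Lorentzian inner product `u ∗ v = u₁v₁ + u₂v₂ − u₃v₃` on ℝ³. -/
def lor (u v : Fin 3 → ℝ) : ℝ := u 0 * v 0 + u 1 * v 1 - u 2 * v 2

/-- The hyperboloid model of the hyperbolic plane. -/
def Hyp : Set (Fin 3 → ℝ) := {u | lor u u = -1 ∧ 0 < u 2}

/-- The Lorentzian cross product `u ⊗ v = J (u × v)`, `J = diag(1,1,−1)`. -/
def lcross (u v : Fin 3 → ℝ) : Fin 3 → ℝ :=
  ![u 1 * v 2 - u 2 * v 1, u 2 * v 0 - u 0 * v 2, -(u 0 * v 1 - u 1 * v 0)]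

/-- Lorentzian magnitude `‖w‖ = √(w ∗ w)` (for `w` with `w ∗ w ≥ 0`). -/
def lnorm (w : Fin 3 → ℝ) : ℝ := Real.sqrt (lor w w)

/-- The unit tangent vector at `p` toward `y`:
`t_p(y) = (y + (p ∗ y)p)/√(y ∗ y + (p ∗ y)²)`. -/
def tang (p y : Fin 3 → ℝ) : Fin 3 → ℝ :=
  (Real.sqrt (lor y y + lor p y ^ 2))⁻¹ • (y + lor p y • p)

/-- Inverse hyperbolic cosine. -/
def arcosh (x : ℝ) : ℝ := Real.log (x + Real.sqrt (x ^ 2 - 1))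

/-- Hyperbolic distance between points of the hyperboloid: `d(p,q) = arccosh(−p ∗ q)`. -/
def dHyp (p q : Fin 3 → ℝ) : ℝ := arcosh (-lor p q)

/-!
Put `x i = cc ∗ p i`. By bilinearity the three conditions on `cc` form the homogeneous linear
system `M x = 0` with `M = !![-b, a, 0; 0, -d, g; e, 0, -z]` (where `a = c₁₂ ∗ p₁`,
`b = c₁₂ ∗ p₂`, …), and `det M = a g e - b d z` is the difference of the two sides of the
compatibility equation. Since the `pᵢ` are linearly independent and `∗` is nondegenerate,
`cc ↦ x` is a linear isomorphism, so a nonzero `cc` exists iff `det M = 0`.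
-/

open Matrix

def lorMatrix : Matrix (Fin 3) (Fin 3) ℝ := diagonal ![1, 1, -1]

lemma lor_comm (u v : Fin 3 → ℝ) : lor u v = lor v u := by
  simp only [lor]; ring

lemma mul_lorMatrix_mulVec (q : Fin 3 → Fin 3 → ℝ) (v : Fin 3 → ℝ) :
    (of q * lorMatrix) *ᵥ v = fun i => lor (q i) v := by
  ext i
  simp only [lor, lorMatrix, mulVec, dotProduct, mul_apply, of_apply, Fin.sum_univ_three,
    diagonal_apply_eq, diagonal_apply_ne, ne_eq, Fin.reduceEq, not_false_eq_true, cons_val_zero,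
    cons_val_one, cons_val]
  ring

lemma det_lorMatrix : lorMatrix.det = -1 := by
  simp [lorMatrix, Fin.prod_univ_three]

lemma exists_ne_zero_lor_eq_zero_iff_det_eq_zero (q : Fin 3 → Fin 3 → ℝ) :
    (∃ w ≠ 0, ∀ i, lor w (q i) = 0) ↔ (of q).det = 0 := by
  have hkernel : ∀ w, (∀ i, lor w (q i) = 0) ↔ (of q * lorMatrix) *ᵥ w = 0 := by
    intro w
    rw [mul_lorMatrix_mulVec q w, funext_iff]
    simp [lor_comm w]
  simp_rw [hkernel, exists_mulVec_eq_zero_iff, det_mul, det_lorMatrix]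
  simp

lemma of_cyclic_differences_eq_mul (p : Fin 3 → Fin 3 → ℝ) (a b g d e z : ℝ) :
    of ![a • p 1 - b • p 0, g • p 2 - d • p 1, e • p 0 - z • p 2]
      = !![-b, a, 0; 0, -d, g; e, 0, -z] * of p := by
  ext i j
  fin_cases i <;>
    simp only [Fin.zero_eta, Fin.mk_one, Fin.reduceFinMk, of_apply, cons_val', Pi.sub_apply,
      Pi.smul_apply, smul_eq_mul, mul_apply, Fin.sum_univ_three, cons_val_zero, cons_val_one,
      cons_val, cons_val_fin_one] <;>
    ring

lemma exists_ne_zero_lor_cyclic_differences_eq_zero_iff (p : Fin 3 → Fin 3 → ℝ)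
    (hp : LinearIndependent ℝ p) (a b g d e z : ℝ) :
    (∃ cc : Fin 3 → ℝ, cc ≠ 0 ∧
        lor cc (a • p 1 - b • p 0) = 0 ∧
        lor cc (g • p 2 - d • p 1) = 0 ∧
        lor cc (e • p 0 - z • p 2) = 0) ↔ a * g * e = b * d * z := by
  have hdet : (of p).det ≠ 0 :=
    ((isUnit_iff_isUnit_det _).mp (linearIndependent_rows_iff_isUnit.mp hp)).ne_zero
  have h := exists_ne_zero_lor_eq_zero_iff_det_eq_zero
    ![a • p 1 - b • p 0, g • p 2 - d • p 1, e • p 0 - z • p 2]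
  rw [of_cyclic_differences_eq_mul, det_mul, mul_eq_zero, or_iff_left hdet, det_fin_three] at h
  simp only [Fin.forall_fin_succ] at h
  convert h using 1
  · simp
  · simp only [of_apply, cons_val', cons_val_zero, cons_val_one, cons_val, cons_val_fin_one]
    constructor <;> intro h <;> linear_combination h

theorem hyperbolic_duality_iff_compatibility_general
    (p : Fin 3 → (Fin 3 → ℝ)) (hp : LinearIndependent ℝ p)
    (c : Fin 3 → Fin 3 → (Fin 3 → ℝ)) :
    ((∃ cc : Fin 3 → ℝ, cc ≠ 0 ∧
        lor cc (lor (c 0 1) (p 0) • p 1 - lor (c 0 1) (p 1) • p 0) = 0 ∧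
        lor cc (lor (c 1 2) (p 1) • p 2 - lor (c 1 2) (p 2) • p 1) = 0 ∧
        lor cc (lor (c 2 0) (p 2) • p 0 - lor (c 2 0) (p 0) • p 2) = 0) ↔
      lor (p 0) (c 0 1) * lor (p 1) (c 1 2) * lor (p 2) (c 2 0)
        = lor (p 0) (c 2 0) * lor (p 1) (c 0 1) * lor (p 2) (c 1 2)) ∧
    ((∃ cc : Fin 3 → ℝ, cc ≠ 0 ∧
        lor cc (lor (c 0 1) (p 0) • p 1 - lor (c 0 1) (p 1) • p 0) = 0 ∧
        lor cc (lor (c 1 2) (p 1) • p 2 - lor (c 1 2) (p 2) • p 1) = 0 ∧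
        lor cc (lor (c 2 0) (p 2) • p 0 - lor (c 2 0) (p 0) • p 2) = 0) ↔
      (-lor (p 0) (c 0 1)) * (-lor (p 1) (c 1 2)) * (-lor (p 2) (c 2 0))
        = (-lor (p 1) (c 0 1)) * (-lor (p 2) (c 1 2)) * (-lor (p 0) (c 2 0))) := by
  have key := exists_ne_zero_lor_cyclic_differences_eq_zero_iff p hp
    (lor (c 0 1) (p 0)) (lor (c 0 1) (p 1)) (lor (c 1 2) (p 1))
    (lor (c 1 2) (p 2)) (lor (c 2 0) (p 2)) (lor (c 2 0) (p 0))
  simp only [lor_comm (p _)]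
  exact ⟨key.trans ⟨fun h => by linear_combination h, fun h => by linear_combination h⟩,
    key.trans ⟨fun h => by linear_combination -h, fun h => by linear_combination -h⟩⟩

/-- Proposition 4.2 (hyperbolic compatibility): the three perpendiculars to the edges of a
hyperbolic triangle through the edge centers meet (in the extended sense) at a single point
if and only if the compatibility equation holds, equivalently
`cosh d₁₂ cosh d₂₃ cosh d₃₁ = cosh d₂₁ cosh d₃₂ cosh d₁₃` where `cosh d_ij = −p_i ∗ c_ij`. -/
theorem hyperbolic_duality_iff_compatibility
    (p : Fin 3 → (Fin 3 → ℝ)) (hp : LinearIndependent ℝ p)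
    (hpH : ∀ i, p i ∈ Hyp)
    (c : Fin 3 → Fin 3 → (Fin 3 → ℝ))
    (hcsymm : ∀ i j : Fin 3, c i j = c j i)
    (hcH : ∀ i j : Fin 3, i ≠ j → c i j ∈ Hyp ∧
      c i j ∈ Submodule.span ℝ ({p i, p j} : Set (Fin 3 → ℝ))) :
    ((∃ cc : Fin 3 → ℝ, cc ≠ 0 ∧
        lor cc (lor (c 0 1) (p 0) • p 1 - lor (c 0 1) (p 1) • p 0) = 0 ∧
        lor cc (lor (c 1 2) (p 1) • p 2 - lor (c 1 2) (p 2) • p 1) = 0 ∧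
        lor cc (lor (c 2 0) (p 2) • p 0 - lor (c 2 0) (p 0) • p 2) = 0) ↔
      lor (p 0) (c 0 1) * lor (p 1) (c 1 2) * lor (p 2) (c 2 0)
        = lor (p 0) (c 2 0) * lor (p 1) (c 0 1) * lor (p 2) (c 1 2)) ∧
    ((∃ cc : Fin 3 → ℝ, cc ≠ 0 ∧
        lor cc (lor (c 0 1) (p 0) • p 1 - lor (c 0 1) (p 1) • p 0) = 0 ∧
        lor cc (lor (c 1 2) (p 1) • p 2 - lor (c 1 2) (p 2) • p 1) = 0 ∧
        lor cc (lor (c 2 0) (p 2) • p 0 - lor (c 2 0) (p 0) • p 2) = 0) ↔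
      (-lor (p 0) (c 0 1)) * (-lor (p 1) (c 1 2)) * (-lor (p 2) (c 2 0))
        = (-lor (p 1) (c 0 1)) * (-lor (p 2) (c 1 2)) * (-lor (p 0) (c 2 0))) :=
  hyperbolic_duality_iff_compatibility_general p hp c
end
end

section
/- (Classification of discrete conformal structures, Euclidean background) Let U = I₁ × I₂ × I₃ ⊆ ℝ³ be a product of open intervals, and suppose a Euclidean conformal triangle datum is given on U. Then there exist constants α₁, α₂, α₃ ∈ ℝ and η₁₂ = η₂₁, η₂₃ = η₃₂, η₁₃ = η₃₁ ∈ ℝ such that on all of U, for all distinct i, j: ℓ_ij² = α_i e^{2f_i} + α_j e^{2f_j} + 2η_ij e^{f_i + f_j} and d_ij = (α_i e^{2f_i} + η_ij e^{f_i + f_j})/ℓ_ij. -/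
noncomputable section

/-- Partial derivative of `F` in the `k`-th coordinate direction at `x`. -/
def pd (k : Fin 3) (F : (Fin 3 → ℝ) → ℝ) (x : Fin 3 → ℝ) : ℝ :=
  fderiv ℝ F x (Pi.single k 1)

/-- The edge length `ℓ_ij = d_ij + d_ji` determined by the partial edge lengths. -/
def len (d : Fin 3 → Fin 3 → (Fin 3 → ℝ) → ℝ) (i j : Fin 3) (x : Fin 3 → ℝ) : ℝ :=
  d i j x + d j i x

/-- The index complementary to `i` and `j` in `{0,1,2}` (for `i ≠ j`). -/
def other (i j : Fin 3) : Fin 3 := -(i + j)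

/-- The angle `γ_i` of the Euclidean triangle with side lengths `ℓ_ab`, defined by the
Euclidean law of cosines `cos γ_i = (ℓ_ij² + ℓ_ik² − ℓ_jk²)/(2 ℓ_ij ℓ_ik)`. -/
def eGamma (d : Fin 3 → Fin 3 → (Fin 3 → ℝ) → ℝ) (i : Fin 3) (x : Fin 3 → ℝ) : ℝ :=
  Real.arccos ((len d i (i+1) x ^ 2 + len d i (i+2) x ^ 2 - len d (i+1) (i+2) x ^ 2) /
    (2 * len d i (i+1) x * len d i (i+2) x))

/-- The signed height `h_ij = (d_ik − d_ij cos γ_i)/sin γ_i` from the edge center of edge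
`{i,j}` to the dual center of the triangle. -/
def eHeight (d : Fin 3 → Fin 3 → (Fin 3 → ℝ) → ℝ) (i j : Fin 3) (x : Fin 3 → ℝ) : ℝ :=
  (d i (other i j) x - d i j x * Real.cos (eGamma d i x)) / Real.sin (eGamma d i x)

namespace ECC

open Real Filter Topology

variable {I : Fin 3 → Set ℝ} {U : Set (Fin 3 → ℝ)}

/-! ### Fin 3 arithmetic facts -/

lemma fin1 : ∀ i : Fin 3, i + 1 ≠ i := by decide
lemma fin2 : ∀ i : Fin 3, i + 2 ≠ i := by decide
lemma fin1' : ∀ i : Fin 3, i ≠ i + 1 := by decide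
lemma fin2' : ∀ i : Fin 3, i ≠ i + 2 := by decide
lemma fin12 : ∀ i : Fin 3, i + 1 ≠ i + 2 := by decide
lemma fin_add21 : ∀ i : Fin 3, i + 2 + 1 = i := by decide
lemma fin_add12 : ∀ i : Fin 3, i + 1 + 2 = i := by decide
lemma fin_cover : ∀ i m : Fin 3, m = i ∨ m = i + 1 ∨ m = i + 2 := by decide
lemma fin_pair : ∀ i j : Fin 3, i ≠ j → j = i + 1 ∨ j = i + 2 := by decide
lemma other_ne : ∀ i j : Fin 3, i ≠ j → other i j ≠ i ∧ other i j ≠ j := by decide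
lemma other_cover : ∀ i j m : Fin 3, i ≠ j → m = i ∨ m = j ∨ m = other i j := by decide

/-! ### Box membership -/

lemma mem_box (hUbox : U = Set.univ.pi I) {x : Fin 3 → ℝ} :
    x ∈ U ↔ ∀ i, x i ∈ I i := by subst hUbox; simp [Set.mem_univ_pi]

lemma update_mem (hUbox : U = Set.univ.pi I) {x : Fin 3 → ℝ} (hx : x ∈ U)
    {k : Fin 3} {t : ℝ} (ht : t ∈ I k) : Function.update x k t ∈ U := by
  rw [mem_box hUbox] at hx ⊢
  intro i
  rcases eq_or_ne i k with rfl | h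
  · simpa using ht
  · simpa [Function.update_of_ne h] using hx i

/-! ### Slice derivatives -/

lemma hasDerivAt_update (x : Fin 3 → ℝ) (k : Fin 3) (t : ℝ) :
    HasDerivAt (fun s => Function.update x k s) (Pi.single k 1) t := by
  rw [hasDerivAt_pi]
  intro i
  rcases eq_or_ne i k with rfl | h
  · simpa [Function.update_self, Pi.single_eq_same] using (hasDerivAt_id' t)
  · simpa [Function.update_of_ne h, Pi.single_eq_of_ne h] using (hasDerivAt_const t (x i))

lemma hasDerivAt_slice {g : (Fin 3 → ℝ) → ℝ} {y : Fin 3 → ℝ}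
    (hg : DifferentiableAt ℝ g y) (x : Fin 3 → ℝ) (k : Fin 3) (t : ℝ)
    (hy : y = Function.update x k t) :
    HasDerivAt (fun s => g (Function.update x k s)) (pd k g y) t := by
  subst hy
  exact hg.hasFDerivAt.comp_hasDerivAt t (hasDerivAt_update x k t)

/-! ### Transport along a coordinate -/

lemma transport (hIopen : ∀ i, IsOpen (I i)) (hIint : ∀ i, (I i).OrdConnected)
    (hUbox : U = Set.univ.pi I)
    {g : (Fin 3 → ℝ) → ℝ} (hg : ∀ y ∈ U, DifferentiableAt ℝ g y)
    {k : Fin 3} {c : ℝ} (hode : ∀ y ∈ U, pd k g y = c * g y)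
    {x : Fin 3 → ℝ} (hx : x ∈ U) {t : ℝ} (ht : t ∈ I k) :
    g (Function.update x k t) = g x * Real.exp (c * (t - x k)) := by
  have hxk : x k ∈ I k := (mem_box hUbox).1 hx k
  set φ : ℝ → ℝ := fun s => g (Function.update x k s) * Real.exp (-(c * s)) with hφ
  have hderiv : ∀ s ∈ I k, HasDerivAt φ 0 s := by
    intro s hs
    have hmem : Function.update x k s ∈ U := update_mem hUbox hx hs
    have h1 : HasDerivAt (fun s' => g (Function.update x k s'))
        (pd k g (Function.update x k s)) s := hasDerivAt_slice (hg _ hmem) x k s rfl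
    have h2 : HasDerivAt (fun s' : ℝ => Real.exp (-(c * s'))) (Real.exp (-(c * s)) * (-c)) s := by
      have h3 : HasDerivAt (fun s' : ℝ => -(c * s')) (-c) s := by
        exact (((hasDerivAt_id' s).const_mul c).neg).congr_deriv (by ring)
      simpa [mul_comm] using h3.exp
    have h4 := h1.mul h2
    refine h4.congr_deriv ?_
    rw [hode _ hmem]; ring
  have hconv : Convex ℝ (I k) := (hIint k).convex
  have hconst : φ t = φ (x k) := by
    apply hconv.is_const_of_fderivWithin_eq_zero (f := φ)
      (fun s hs => (hderiv s hs).differentiableAt.differentiableWithinAt) ?_ ht hxk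
    intro s hs
    rw [fderivWithin_of_isOpen (hIopen k) hs, (hderiv s hs).hasFDerivAt.fderiv]
    ext u; simp
  have hexp : Real.exp (c * (t - x k)) * Real.exp (-(c * t)) = Real.exp (-(c * x k)) := by
    rw [← Real.exp_add]; congr 1; ring
  have hupdx : Function.update x k (x k) = x := Function.update_eq_self k x
  apply mul_right_cancel₀ (Real.exp_ne_zero (-(c * t)))
  calc g (Function.update x k t) * Real.exp (-(c * t)) = φ t := rfl
    _ = φ (x k) := hconst
    _ = g x * Real.exp (-(c * x k)) := by rw [hφ]; simp [hupdx]
    _ = g x * (Real.exp (c * (t - x k)) * Real.exp (-(c * t))) := by rw [hexp]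
    _ = g x * Real.exp (c * (t - x k)) * Real.exp (-(c * t)) := by ring

lemma transport0 (hIopen : ∀ i, IsOpen (I i)) (hIint : ∀ i, (I i).OrdConnected)
    (hUbox : U = Set.univ.pi I)
    {g : (Fin 3 → ℝ) → ℝ} (hg : ∀ y ∈ U, DifferentiableAt ℝ g y)
    {k : Fin 3} (hode : ∀ y ∈ U, pd k g y = 0)
    {x : Fin 3 → ℝ} (hx : x ∈ U) {t : ℝ} (ht : t ∈ I k) :
    g (Function.update x k t) = g x := by
  have := transport hIopen hIint hUbox hg (c := 0) (fun y hy => by simpa using hode y hy) hx ht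
  simpa using this

lemma pd_eq_zero_of_indep (hIopen : ∀ i, IsOpen (I i)) (hUbox : U = Set.univ.pi I)
    {g : (Fin 3 → ℝ) → ℝ} {k : Fin 3}
    (hind : ∀ x ∈ U, ∀ t ∈ I k, g (Function.update x k t) = g x)
    {x : Fin 3 → ℝ} (hx : x ∈ U) (hg : DifferentiableAt ℝ g x) : pd k g x = 0 := by
  have h1 : HasDerivAt (fun s => g (Function.update x k s)) (pd k g x) (x k) :=
    hasDerivAt_slice hg x k (x k) (Function.update_eq_self k x).symm
  have h2 : (fun s => g (Function.update x k s)) =ᶠ[𝓝 (x k)] fun _ => g x := by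
    filter_upwards [(hIopen k).mem_nhds ((mem_box hUbox).1 hx k)] with s hs
    exact hind x hx s hs
  have h3 : HasDerivAt (fun _ : ℝ => g x) (pd k g x) (x k) :=
    h1.congr_of_eventuallyEq h2.symm
  exact h3.unique (hasDerivAt_const _ _)

lemma pd_indep (hIopen : ∀ i, IsOpen (I i)) (hUbox : U = Set.univ.pi I)
    {g : (Fin 3 → ℝ) → ℝ} (hg : ∀ y ∈ U, DifferentiableAt ℝ g y)
    {k : Fin 3} (hind : ∀ x ∈ U, ∀ t ∈ I k, g (Function.update x k t) = g x)
    {j : Fin 3} (hjk : j ≠ k)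
    {x : Fin 3 → ℝ} (hx : x ∈ U) {t : ℝ} (ht : t ∈ I k) :
    pd j g (Function.update x k t) = pd j g x := by
  set y := Function.update x k t with hy
  have hyU : y ∈ U := update_mem hUbox hx ht
  have hyj : y j = x j := Function.update_of_ne hjk t x
  have h1 : HasDerivAt (fun s => g (Function.update y j s)) (pd j g y) (x j) := by
    rw [← hyj]
    exact hasDerivAt_slice (hg y hyU) y j (y j) (Function.update_eq_self j y).symm
  have h2 : HasDerivAt (fun s => g (Function.update x j s)) (pd j g x) (x j) :=
    hasDerivAt_slice (hg x hx) x j (x j) (Function.update_eq_self j x).symm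
  have heq : (fun s => g (Function.update x j s)) =ᶠ[𝓝 (x j)]
      (fun s => g (Function.update y j s)) := by
    filter_upwards [(hIopen j).mem_nhds ((mem_box hUbox).1 hx j)] with s hs
    have hxs : Function.update x j s ∈ U := update_mem hUbox hx hs
    have hcomm : Function.update y j s = Function.update (Function.update x j s) k t := by
      rw [hy, Function.update_comm hjk.symm]
    rw [hcomm, hind _ hxs t ht]
  have h1' : HasDerivAt (fun s => g (Function.update x j s)) (pd j g y) (x j) :=
    h1.congr_of_eventuallyEq heq
  exact h1'.unique h2

lemma eq_on_box_of_pd_zero (hIopen : ∀ i, IsOpen (I i)) (hIint : ∀ i, (I i).OrdConnected)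
    (hUbox : U = Set.univ.pi I)
    {g : (Fin 3 → ℝ) → ℝ} (hg : ∀ y ∈ U, DifferentiableAt ℝ g y)
    (h0 : ∀ k : Fin 3, ∀ y ∈ U, pd k g y = 0)
    {x p : Fin 3 → ℝ} (hx : x ∈ U) (hp : p ∈ U) : g x = g p := by
  have hxI : ∀ i, x i ∈ I i := (mem_box hUbox).1 hx
  set p1 := Function.update p 0 (x 0) with hp1
  have hp1U : p1 ∈ U := update_mem hUbox hp (hxI 0)
  set p2 := Function.update p1 1 (x 1) with hp2
  have hp2U : p2 ∈ U := update_mem hUbox hp1U (hxI 1)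
  have hx3 : x = Function.update p2 2 (x 2) := by
    funext m
    fin_cases m <;> simp [hp2, hp1, Function.update]
  have e3 : g (Function.update p2 2 (x 2)) = g p2 :=
    transport0 hIopen hIint hUbox hg (h0 2) hp2U (hxI 2)
  have e2 : g p2 = g p1 := transport0 hIopen hIint hUbox hg (h0 1) hp1U (hxI 1)
  have e1 : g p1 = g p := transport0 hIopen hIint hUbox hg (h0 0) hp (hxI 0)
  rw [hx3, e3, e2, e1]

/-! ### pd calculus -/

variable {g h : (Fin 3 → ℝ) → ℝ} {x : Fin 3 → ℝ} {k : Fin 3}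

lemma pd_congr (hUopen : IsOpen U) (hgh : ∀ y ∈ U, g y = h y) (hx : x ∈ U) (k : Fin 3) :
    pd k g x = pd k h x := by
  have hev : g =ᶠ[𝓝 x] h := by
    filter_upwards [hUopen.mem_nhds hx] with y hy; exact hgh y hy
  unfold pd; rw [hev.fderiv_eq]

lemma pd_add (hg : DifferentiableAt ℝ g x) (hh : DifferentiableAt ℝ h x) (k : Fin 3) :
    pd k (fun y => g y + h y) x = pd k g x + pd k h x := by
  unfold pd; rw [fderiv_fun_add hg hh]; simp

lemma pd_sub (hg : DifferentiableAt ℝ g x) (hh : DifferentiableAt ℝ h x) (k : Fin 3) :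
    pd k (fun y => g y - h y) x = pd k g x - pd k h x := by
  unfold pd; rw [fderiv_fun_sub hg hh]; simp

lemma pd_neg (k : Fin 3) : pd k (fun y => -g y) x = -pd k g x := by
  unfold pd; rw [fderiv_fun_neg]; simp

lemma pd_const_mul (hg : DifferentiableAt ℝ g x) (c : ℝ) (k : Fin 3) :
    pd k (fun y => c * g y) x = c * pd k g x := by
  unfold pd; rw [fderiv_const_mul hg c]; simp

lemma pd_mul (hg : DifferentiableAt ℝ g x) (hh : DifferentiableAt ℝ h x) (k : Fin 3) :
    pd k (fun y => g y * h y) x = pd k g x * h x + g x * pd k h x := by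
  unfold pd
  rw [(hg.hasFDerivAt.fun_mul hh.hasFDerivAt).fderiv]
  simp [smul_eq_mul]; ring

lemma pd_sq (hg : DifferentiableAt ℝ g x) (k : Fin 3) :
    pd k (fun y => g y ^ 2) x = 2 * g x * pd k g x := by
  have hsq : (fun y => g y ^ 2) = fun y => g y * g y := by
    funext y; ring
  rw [hsq, pd_mul hg hg]; ring

lemma hasFDerivAt_explin (a b : ℝ) (i j : Fin 3) (x : Fin 3 → ℝ) :
    HasFDerivAt (fun y : Fin 3 → ℝ => Real.exp (a * y i + b * y j))
      (Real.exp (a * x i + b * x j) •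
        (a • (ContinuousLinearMap.proj i : (Fin 3 → ℝ) →L[ℝ] ℝ)
          + b • (ContinuousLinearMap.proj j : (Fin 3 → ℝ) →L[ℝ] ℝ))) x := by
  set M : (Fin 3 → ℝ) →L[ℝ] ℝ :=
    a • (ContinuousLinearMap.proj i : (Fin 3 → ℝ) →L[ℝ] ℝ)
      + b • (ContinuousLinearMap.proj j : (Fin 3 → ℝ) →L[ℝ] ℝ) with hM
  have hfun : (fun y : Fin 3 → ℝ => a * y i + b * y j) = ⇑M := by
    funext y
    simp [hM, ContinuousLinearMap.add_apply, ContinuousLinearMap.smul_apply,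
      ContinuousLinearMap.proj_apply, smul_eq_mul]
  have h1 : HasFDerivAt (fun y : Fin 3 → ℝ => a * y i + b * y j) M x := by
    rw [hfun]; exact M.hasFDerivAt
  exact h1.exp

lemma differentiableAt_explin (a b : ℝ) (i j : Fin 3) (x : Fin 3 → ℝ) :
    DifferentiableAt ℝ (fun y : Fin 3 → ℝ => Real.exp (a * y i + b * y j)) x :=
  (hasFDerivAt_explin a b i j x).differentiableAt

lemma pd_explin (a b : ℝ) (i j k : Fin 3) (x : Fin 3 → ℝ) :
    pd k (fun y => Real.exp (a * y i + b * y j)) x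
      = Real.exp (a * x i + b * x j)
          * (a * (if i = k then 1 else 0) + b * (if j = k then 1 else 0)) := by
  unfold pd
  rw [(hasFDerivAt_explin a b i j x).fderiv]
  simp [ContinuousLinearMap.proj_apply, Pi.single_apply, smul_eq_mul]
  split_ifs <;> ring

lemma pd_exp_single (a : ℝ) (i k : Fin 3) (x : Fin 3 → ℝ) :
    pd k (fun y => Real.exp (a * y i)) x
      = Real.exp (a * x i) * (a * (if i = k then 1 else 0)) := by
  have h0 : (fun y : Fin 3 → ℝ => Real.exp (a * y i))
      = fun y => Real.exp (a * y i + 0 * y i) := by funext y; ring_nf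
  rw [h0, pd_explin a 0 i i k x]
  simp

lemma differentiableAt_exp_single (a : ℝ) (i : Fin 3) (x : Fin 3 → ℝ) :
    DifferentiableAt ℝ (fun y : Fin 3 → ℝ => Real.exp (a * y i)) x := by
  have h0 : (fun y : Fin 3 → ℝ => Real.exp (a * y i))
      = fun y => Real.exp (a * y i + 0 * y i) := by funext y; ring_nf
  rw [h0]; exact differentiableAt_explin a 0 i i x

lemma pd_comm (hUopen : IsOpen U) (hg : ContDiffOn ℝ (⊤ : ℕ∞) g U) (hx : x ∈ U) (i j : Fin 3) :
    pd i (fun y => pd j g y) x = pd j (fun y => pd i g y) x := by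
  have hU : U ∈ 𝓝 x := hUopen.mem_nhds hx
  have hd1 : ∀ y ∈ U, DifferentiableAt ℝ g y := fun y hy =>
    ((hg.contDiffAt (hUopen.mem_nhds hy)).differentiableAt (by simp))
  have hf' : ContDiffOn ℝ (⊤ : ℕ∞) (fderiv ℝ g) U :=
    hg.fderiv_of_isOpen hUopen (by simp)
  have hdf : DifferentiableAt ℝ (fderiv ℝ g) x :=
    (hf'.contDiffAt hU).differentiableAt (by simp)
  have hsymm := second_derivative_symmetric_of_eventually
    (f := g) (f' := fderiv ℝ g) (f'' := fderiv ℝ (fderiv ℝ g) x)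
    (by filter_upwards [hU] with y hy; exact (hd1 y hy).hasFDerivAt)
    hdf.hasFDerivAt
  have key : ∀ v : Fin 3 → ℝ,
      HasFDerivAt (fun y => fderiv ℝ g y v) ((fderiv ℝ (fderiv ℝ g) x).flip v) x := by
    intro v
    have h := hdf.hasFDerivAt.clm_apply (hasFDerivAt_const v x)
    simpa using h
  show fderiv ℝ (fun y => fderiv ℝ g y (Pi.single j 1)) x (Pi.single i 1)
      = fderiv ℝ (fun y => fderiv ℝ g y (Pi.single i 1)) x (Pi.single j 1)
  rw [(key (Pi.single j 1)).fderiv, (key (Pi.single i 1)).fderiv]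
  exact hsymm _ _

end ECC

/-- The antisymmetric part `A_ij = d_ij² − d_ji²`. -/
def Afun (d : Fin 3 → Fin 3 → (Fin 3 → ℝ) → ℝ) (i j : Fin 3) (y : Fin 3 → ℝ) : ℝ :=
  d i j y ^ 2 - d j i y ^ 2

lemma compat_triple (d : Fin 3 → Fin 3 → (Fin 3 → ℝ) → ℝ) (x : Fin 3 → ℝ)
    (hc : d 0 1 x ^ 2 + d 1 2 x ^ 2 + d 2 0 x ^ 2
        = d 1 0 x ^ 2 + d 2 1 x ^ 2 + d 0 2 x ^ 2) :
    ∀ i j k : Fin 3, i ≠ j → j ≠ k → i ≠ k →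
      Afun d i j x + Afun d j k x + Afun d k i x = 0 := by
  intro i j k hij hjk hik
  simp only [Afun]
  fin_cases i <;> fin_cases j <;> fin_cases k <;>
    simp_all only [ne_eq, Fin.mk.injEq, Fin.isValue,
      show (⟨0, by omega⟩ : Fin 3) = 0 from rfl,
      show (⟨1, by omega⟩ : Fin 3) = 1 from rfl,
      show (⟨2, by omega⟩ : Fin 3) = 2 from rfl] <;>
    first
      | omega
      | linarith

/-- Theorem 1.5 (classification of discrete conformal structures, Euclidean background):
on a box `U`, every Euclidean conformal triangle datum is of the form
`ℓ_ij² = α_i e^{2f_i} + α_j e^{2f_j} + 2η_ij e^{f_i+f_j}`,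
`d_ij = (α_i e^{2f_i} + η_ij e^{f_i+f_j})/ℓ_ij`. -/
theorem euclidean_conformal_classification
    (I : Fin 3 → Set ℝ)
    (hIopen : ∀ i, IsOpen (I i)) (hIinterval : ∀ i, (I i).OrdConnected)
    (U : Set (Fin 3 → ℝ)) (hUopen : IsOpen U)
    (d : Fin 3 → Fin 3 → (Fin 3 → ℝ) → ℝ)
    (hsmooth : ∀ i j : Fin 3, i ≠ j → ContDiffOn ℝ (⊤ : ℕ∞) (d i j) U)
    (hdep : ∀ i j k : Fin 3, i ≠ j → k ≠ i → k ≠ j → ∀ x ∈ U, pd k (d i j) x = 0)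
    (hpos : ∀ i j : Fin 3, i ≠ j → ∀ x ∈ U, 0 < len d i j x)
    (htri : ∀ i j k : Fin 3, i ≠ j → j ≠ k → i ≠ k → ∀ x ∈ U,
      len d i j x < len d i k x + len d k j x)
    (hcompat : ∀ x ∈ U,
      d 0 1 x ^ 2 + d 1 2 x ^ 2 + d 2 0 x ^ 2
        = d 1 0 x ^ 2 + d 2 1 x ^ 2 + d 0 2 x ^ 2)
    (hconf : ∀ i j : Fin 3, i ≠ j → ∀ x ∈ U, pd i (len d i j) x = d i j x)
    (hUbox : U = Set.univ.pi I) :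
    ∃ α : Fin 3 → ℝ, ∃ η : Fin 3 → Fin 3 → ℝ,
      (∀ i j : Fin 3, η i j = η j i) ∧
      ∀ x ∈ U, ∀ i j : Fin 3, i ≠ j →
        len d i j x ^ 2
          = α i * Real.exp (2 * x i) + α j * Real.exp (2 * x j)
            + 2 * η i j * Real.exp (x i + x j) ∧
        d i j x
          = (α i * Real.exp (2 * x i) + η i j * Real.exp (x i + x j)) / len d i j x := by
  classical
  rcases U.eq_empty_or_nonempty with hUe | ⟨p, hp⟩
  · exact ⟨fun _ => 0, fun _ _ => 0, fun _ _ => rfl, by simp [hUe]⟩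
  -- differentiability bookkeeping
  have hdiffd : ∀ i j : Fin 3, i ≠ j → ∀ x ∈ U, DifferentiableAt ℝ (d i j) x := by
    intro i j hij x hx
    exact ((hsmooth i j hij).contDiffAt (hUopen.mem_nhds hx)).differentiableAt (by simp)
  have hAsm : ∀ i j : Fin 3, i ≠ j → ContDiffOn ℝ (⊤ : ℕ∞) (Afun d i j) U := by
    intro i j hij
    exact ((hsmooth i j hij).pow 2).sub ((hsmooth j i hij.symm).pow 2)
  have hAdiff : ∀ i j : Fin 3, i ≠ j → ∀ x ∈ U, DifferentiableAt ℝ (Afun d i j) x := by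
    intro i j hij x hx
    exact ((hAsm i j hij).contDiffAt (hUopen.mem_nhds hx)).differentiableAt (by simp)
  have hlensm : ∀ i j : Fin 3, i ≠ j → ContDiffOn ℝ (⊤ : ℕ∞) (len d i j) U := by
    intro i j hij
    exact (hsmooth i j hij).add (hsmooth j i hij.symm)
  have hlendiff : ∀ i j : Fin 3, i ≠ j → ∀ x ∈ U, DifferentiableAt ℝ (len d i j) x := by
    intro i j hij x hx
    exact ((hlensm i j hij).contDiffAt (hUopen.mem_nhds hx)).differentiableAt (by simp)
  have hLsm : ∀ i j : Fin 3, i ≠ j → ContDiffOn ℝ (⊤ : ℕ∞) (fun y => len d i j y ^ 2) U := by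
    intro i j hij
    exact (hlensm i j hij).pow 2
  have hLdiff : ∀ i j : Fin 3, i ≠ j → ∀ x ∈ U, DifferentiableAt ℝ (fun y => len d i j y ^ 2) x :=
    fun i j hij x hx => (hlendiff i j hij x hx).pow 2
  have hlensymm : ∀ i j : Fin 3, len d i j = len d j i := by
    intro i j; funext y; simp [len, add_comm]
  -- partial derivatives of len
  have hpdlen : ∀ i j : Fin 3, i ≠ j → ∀ (k : Fin 3), ∀ x ∈ U,
      pd k (len d i j) x = pd k (d i j) x + pd k (d j i) x :=
    fun i j hij k x hx => ECC.pd_add (hdiffd i j hij x hx) (hdiffd j i hij.symm x hx) k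
  have hpdlen0 : ∀ i j k : Fin 3, i ≠ j → k ≠ i → k ≠ j → ∀ x ∈ U,
      pd k (len d i j) x = 0 := by
    intro i j k hij hki hkj x hx
    rw [hpdlen i j hij k x hx, hdep i j k hij hki hkj x hx, hdep j i k hij.symm hkj hki x hx]
    ring
  have hconf2 : ∀ i j : Fin 3, i ≠ j → ∀ x ∈ U, pd j (len d i j) x = d j i x := by
    intro i j hij x hx
    rw [hlensymm i j]
    exact hconf j i hij.symm x hx
  -- pd of the squared length
  have hpdL : ∀ i j : Fin 3, i ≠ j → ∀ x ∈ U,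
      pd i (fun y => len d i j y ^ 2) x = len d i j x ^ 2 + Afun d i j x := by
    intro i j hij x hx
    rw [ECC.pd_sq (hlendiff i j hij x hx) i, hconf i j hij x hx]
    simp only [len, Afun]; ring
  have hpdLj : ∀ i j : Fin 3, i ≠ j → ∀ x ∈ U,
      pd j (fun y => len d i j y ^ 2) x = len d i j x ^ 2 + Afun d j i x := by
    intro i j hij x hx
    rw [ECC.pd_sq (hlendiff i j hij x hx) j, hconf2 i j hij x hx]
    simp only [len, Afun]; ring
  -- pd of A in a foreign direction vanishes
  have hApd0 : ∀ i j k : Fin 3, i ≠ j → k ≠ i → k ≠ j → ∀ x ∈ U,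
      pd k (Afun d i j) x = 0 := by
    intro i j k hij hki hkj x hx
    show pd k (fun y => d i j y ^ 2 - d j i y ^ 2) x = 0
    rw [ECC.pd_sub ((hdiffd i j hij x hx).fun_pow 2) ((hdiffd j i hij.symm x hx).fun_pow 2) k,
      ECC.pd_sq (hdiffd i j hij x hx) k, ECC.pd_sq (hdiffd j i hij.symm x hx) k,
      hdep i j k hij hki hkj x hx, hdep j i k hij.symm hkj hki x hx]
    ring
  have hAindep : ∀ i j k : Fin 3, i ≠ j → k ≠ i → k ≠ j → ∀ x ∈ U, ∀ t ∈ I k,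
      Afun d i j (Function.update x k t) = Afun d i j x := by
    intro i j k hij hki hkj x hx t ht
    exact ECC.transport0 hIopen hIinterval hUbox (fun y hy => hAdiff i j hij y hy)
      (fun y hy => hApd0 i j k hij hki hkj y hy) hx ht
  have hAneg : ∀ i j : Fin 3, ∀ y : Fin 3 → ℝ, Afun d j i y = -Afun d i j y := by
    intro i j y; simp only [Afun]; ring
  -- compatibility, all distinct triples
  have hStri : ∀ i j k : Fin 3, i ≠ j → j ≠ k → i ≠ k → ∀ x ∈ U,
      Afun d i j x + Afun d j k x + Afun d k i x = 0 := by
    intro i j k hij hjk hik x hx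
    exact compat_triple d x (hcompat x hx) i j k hij hjk hik
  -- Clairaut relation : pd_i A + pd_j A = 2 A on U
  have hclair : ∀ i j : Fin 3, i ≠ j → ∀ x ∈ U,
      pd i (Afun d i j) x + pd j (Afun d i j) x = 2 * Afun d i j x := by
    intro i j hij x hx
    have hcomm := ECC.pd_comm hUopen (hLsm i j hij) hx i j
    have e1 : pd i (fun y => pd j (fun z => len d i j z ^ 2) y) x
        = pd i (fun y => len d i j y ^ 2 + Afun d j i y) x :=
      ECC.pd_congr hUopen (fun y hy => hpdLj i j hij y hy) hx i
    have e2 : pd i (fun y => len d i j y ^ 2 + Afun d j i y) x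
        = (len d i j x ^ 2 + Afun d i j x) + pd i (Afun d j i) x := by
      rw [ECC.pd_add (hLdiff i j hij x hx) (hAdiff j i hij.symm x hx) i, hpdL i j hij x hx]
    have e3 : pd i (Afun d j i) x = -pd i (Afun d i j) x := by
      have hfeq : Afun d j i = fun y => -Afun d i j y := funext fun y => hAneg i j y
      rw [hfeq, ECC.pd_neg i]
    have f1 : pd j (fun y => pd i (fun z => len d i j z ^ 2) y) x
        = pd j (fun y => len d i j y ^ 2 + Afun d i j y) x :=
      ECC.pd_congr hUopen (fun y hy => hpdL i j hij y hy) hx j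
    have f2 : pd j (fun y => len d i j y ^ 2 + Afun d i j y) x
        = (len d i j x ^ 2 + Afun d j i x) + pd j (Afun d i j) x := by
      rw [ECC.pd_add (hLdiff i j hij x hx) (hAdiff i j hij x hx) j, hpdLj i j hij x hx]
    have hptneg : Afun d j i x = -Afun d i j x := hAneg i j x
    have hmain := hcomm
    rw [e1, e2, e3, f1, f2, hptneg] at hmain
    linarith
  -- the functions u i
  set u : Fin 3 → (Fin 3 → ℝ) → ℝ := fun i y => pd i (Afun d i (i + 1)) y with hu
  have hu_app : ∀ (i : Fin 3) (y : Fin 3 → ℝ), u i y = pd i (Afun d i (i + 1)) y := by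
    intro i y; rw [hu]
  have hu_fun : ∀ i : Fin 3, u i = fun y => pd i (Afun d i (i + 1)) y := by
    intro i; rw [hu]
  have husm : ∀ i : Fin 3, ∀ x ∈ U, DifferentiableAt ℝ (u i) x := by
    intro i x hx
    have hf' : ContDiffOn ℝ 1 (fderiv ℝ (Afun d i (i + 1))) U :=
      (hAsm i (i + 1) (ECC.fin1' i)).fderiv_of_isOpen hUopen (WithTop.coe_le_coe.mpr le_top)
    have h2 : ContDiffOn ℝ 1
        (fun y => fderiv ℝ (Afun d i (i + 1)) y (Pi.single i 1)) U :=
      hf'.clm_apply contDiffOn_const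
    have h3 := (h2.contDiffAt (hUopen.mem_nhds hx)).differentiableAt one_ne_zero
    rw [hu_fun i]
    simpa [pd] using h3
  have hu_alt : ∀ i : Fin 3, ∀ x ∈ U, u i x = -pd i (Afun d (i + 2) i) x := by
    intro i x hx
    have h1 : ∀ y ∈ U, Afun d i (i + 1) y
        = -Afun d (i + 1) (i + 2) y - Afun d (i + 2) i y := by
      intro y hy
      have := hStri i (i + 1) (i + 2) (ECC.fin1' i) (ECC.fin12 i) (ECC.fin2' i) y hy
      linarith
    have e1 : pd i (Afun d i (i + 1)) x
        = pd i (fun y => -Afun d (i + 1) (i + 2) y - Afun d (i + 2) i y) x :=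
      ECC.pd_congr hUopen h1 hx i
    have e2 : pd i (fun y => -Afun d (i + 1) (i + 2) y - Afun d (i + 2) i y) x
        = -pd i (Afun d (i + 1) (i + 2)) x - pd i (Afun d (i + 2) i) x := by
      rw [ECC.pd_sub ((hAdiff (i + 1) (i + 2) (ECC.fin12 i) x hx).fun_neg)
        (hAdiff (i + 2) i (ECC.fin2 i) x hx) i, ECC.pd_neg i]
    have e3 : pd i (Afun d (i + 1) (i + 2)) x = 0 :=
      hApd0 (i + 1) (i + 2) i (ECC.fin12 i) (ECC.fin1' i) (ECC.fin2' i) x hx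
    rw [hu_app i x, e1, e2, e3]
    ring
  have hu_ind : ∀ i m : Fin 3, m ≠ i → ∀ x ∈ U, ∀ t ∈ I m,
      u i (Function.update x m t) = u i x := by
    intro i m hmi x hx t ht
    rcases ECC.fin_pair i m (Ne.symm hmi) with rfl | rfl
    · -- m = i + 1 : use the alternative representation
      have hxU' : Function.update x (i + 1) t ∈ U := ECC.update_mem hUbox hx ht
      have hAind' := hAindep (i + 2) i (i + 1) (ECC.fin2 i) (ECC.fin12 i) (ECC.fin1 i)
      rw [hu_alt i _ hxU', hu_alt i x hx,
        ECC.pd_indep hIopen hUbox (fun y hy => hAdiff (i + 2) i (ECC.fin2 i) y hy)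
          (fun y hy s hs => hAind' y hy s hs) (ECC.fin1' i) hx ht]
    · -- m = i + 2 : direct
      have hAind' := hAindep i (i + 1) (i + 2) (ECC.fin1' i) (ECC.fin2 i) (ECC.fin12 i).symm
      rw [hu_app i _, hu_app i x,
        ECC.pd_indep hIopen hUbox (fun y hy => hAdiff i (i + 1) (ECC.fin1' i) y hy)
          (fun y hy s hs => hAind' y hy s hs) (ECC.fin2' i) hx ht]
  have hu_pd0 : ∀ i m : Fin 3, m ≠ i → ∀ x ∈ U, pd m (u i) x = 0 := by
    intro i m hmi x hx
    exact ECC.pd_eq_zero_of_indep hIopen hUbox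
      (fun y hy t ht => hu_ind i m hmi y hy t ht) hx (husm i x hx)
  have h12a : ∀ i : Fin 3, ∀ x ∈ U, u i x - u (i + 1) x = 2 * Afun d i (i + 1) x := by
    intro i x hx
    have hcl := hclair i (i + 1) (ECC.fin1' i) x hx
    have halt := hu_alt (i + 1) x hx
    rw [ECC.fin_add12 i] at halt
    rw [hu_app i x, halt]
    linarith
  have h12 : ∀ i : Fin 3, ∀ x ∈ U, pd i (u i) x = 2 * u i x := by
    intro i x hx
    have h1 : ∀ y ∈ U, Afun d i (i + 1) y = (1 / 2) * (u i y - u (i + 1) y) := by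
      intro y hy; have := h12a i y hy; linarith
    have e1 : pd i (Afun d i (i + 1)) x
        = pd i (fun y => (1 / 2) * (u i y - u (i + 1) y)) x :=
      ECC.pd_congr hUopen h1 hx i
    have e2 : pd i (fun y => (1 / 2) * (u i y - u (i + 1) y)) x
        = (1 / 2) * pd i (fun y => u i y - u (i + 1) y) x :=
      ECC.pd_const_mul ((husm i x hx).sub (husm (i + 1) x hx)) (1 / 2) i
    have e3 : pd i (fun y => u i y - u (i + 1) y) x
        = pd i (u i) x - pd i (u (i + 1)) x :=
      ECC.pd_sub (husm i x hx) (husm (i + 1) x hx) i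
    have e4 : pd i (u (i + 1)) x = 0 := hu_pd0 (i + 1) i (ECC.fin1' i) x hx
    have key : u i x = (1 / 2) * (pd i (u i) x - pd i (u (i + 1)) x) := by
      rw [hu_app i x, e1, e2, e3]
    rw [e4] at key
    linarith
  -- transport u to closed form
  have hform : ∀ i : Fin 3, ∀ x ∈ U, u i x = u i p * Real.exp (2 * (x i - p i)) := by
    intro i x hx
    have hxI : ∀ m, x m ∈ I m := (ECC.mem_box hUbox).1 hx
    set q1 := Function.update p (i + 1) (x (i + 1)) with hq1
    have hq1U : q1 ∈ U := ECC.update_mem hUbox hp (hxI (i + 1))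
    set q2 := Function.update q1 (i + 2) (x (i + 2)) with hq2
    have hq2U : q2 ∈ U := ECC.update_mem hUbox hq1U (hxI (i + 2))
    have hxq : x = Function.update q2 i (x i) := by
      funext m
      rcases ECC.fin_cover i m with rfl | rfl | rfl
      · simp
      · rw [Function.update_of_ne (ECC.fin1 i), hq2,
          Function.update_of_ne (ECC.fin12 i), hq1, Function.update_self]
      · rw [Function.update_of_ne (ECC.fin2 i), hq2, Function.update_self]
    have e1 : u i q1 = u i p := hu_ind i (i + 1) (ECC.fin1 i) p hp _ (hxI (i + 1))
    have e2 : u i q2 = u i q1 := hu_ind i (i + 2) (ECC.fin2 i) q1 hq1U _ (hxI (i + 2))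
    have hq2i : q2 i = p i := by
      rw [hq2, Function.update_of_ne (ECC.fin2' i), hq1, Function.update_of_ne (ECC.fin1' i)]
    have e3 : u i (Function.update q2 i (x i)) = u i q2 * Real.exp (2 * (x i - q2 i)) :=
      ECC.transport hIopen hIinterval hUbox (fun y hy => husm i y hy)
        (fun y hy => h12 i y hy) hq2U (hxI i)
    rw [← hxq] at e3
    rw [e3, e2, e1, hq2i]
  set α : Fin 3 → ℝ := fun i => u i p * Real.exp (-(2 * p i)) / 2 with hα
  have huform : ∀ i : Fin 3, ∀ x ∈ U, u i x = 2 * α i * Real.exp (2 * x i) := by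
    intro i x hx
    rw [hform i x hx]
    simp only [hα]
    have hexp : Real.exp (2 * (x i - p i)) = Real.exp (-(2 * p i)) * Real.exp (2 * x i) := by
      rw [← Real.exp_add]; congr 1; ring
    rw [hexp]; ring
  have hAform : ∀ i j : Fin 3, i ≠ j → ∀ x ∈ U,
      Afun d i j x = α i * Real.exp (2 * x i) - α j * Real.exp (2 * x j) := by
    have hbase : ∀ i : Fin 3, ∀ x ∈ U, Afun d i (i + 1) x
        = α i * Real.exp (2 * x i) - α (i + 1) * Real.exp (2 * x (i + 1)) := by
      intro i x hx
      have h := h12a i x hx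
      rw [huform i x hx, huform (i + 1) x hx] at h
      linarith
    intro i j hij x hx
    rcases ECC.fin_pair i j hij with rfl | rfl
    · exact hbase i x hx
    · have h1 := hbase (i + 2) x hx
      rw [ECC.fin_add21 i] at h1
      rw [hAneg (i + 2) i x, h1]
      ring
  -- the η constants and conclusion
  set η : Fin 3 → Fin 3 → ℝ := fun i j =>
    (len d i j p ^ 2 - α i * Real.exp (2 * p i) - α j * Real.exp (2 * p j))
      * Real.exp (-(p i + p j)) / 2 with hη
  refine ⟨α, η, ?_, ?_⟩
  · intro i j
    simp only [hη]
    rw [hlensymm i j, add_comm (p i) (p j)]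
    ring
  intro x hx i j hij
  obtain ⟨hki, hkj⟩ := ECC.other_ne i j hij
  set Gf : (Fin 3 → ℝ) → ℝ := fun y =>
    len d i j y ^ 2 - α i * Real.exp (2 * y i) - α j * Real.exp (2 * y j) with hGf
  set Ef : (Fin 3 → ℝ) → ℝ := fun y => Real.exp ((-1) * y i + (-1) * y j) with hEf
  have hGdiff : ∀ y ∈ U, DifferentiableAt ℝ Gf y := by
    intro y hy
    simp only [hGf]
    exact (((hlendiff i j hij y hy).pow 2).sub
      ((ECC.differentiableAt_exp_single 2 i y).const_mul (α i))).sub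
      ((ECC.differentiableAt_exp_single 2 j y).const_mul (α j))
  have hEdiff : ∀ y : Fin 3 → ℝ, DifferentiableAt ℝ Ef y := by
    intro y; simp only [hEf]; exact ECC.differentiableAt_explin (-1) (-1) i j y
  have hpdG_sub : ∀ (m : Fin 3), ∀ y ∈ U, pd m Gf y
      = pd m (fun z => len d i j z ^ 2) y
        - α i * (Real.exp (2 * y i) * (2 * (if i = m then 1 else 0)))
        - α j * (Real.exp (2 * y j) * (2 * (if j = m then 1 else 0))) := by
    intro m y hy
    simp only [hGf]
    rw [ECC.pd_sub (((hlendiff i j hij y hy).fun_pow 2).fun_sub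
        ((ECC.differentiableAt_exp_single 2 i y).const_mul (α i)))
        ((ECC.differentiableAt_exp_single 2 j y).const_mul (α j)) m,
      ECC.pd_sub ((hlendiff i j hij y hy).fun_pow 2)
        ((ECC.differentiableAt_exp_single 2 i y).const_mul (α i)) m,
      ECC.pd_const_mul (ECC.differentiableAt_exp_single 2 i y) (α i) m,
      ECC.pd_const_mul (ECC.differentiableAt_exp_single 2 j y) (α j) m,
      ECC.pd_exp_single 2 i m y, ECC.pd_exp_single 2 j m y]
  have hpdGi : ∀ y ∈ U, pd i Gf y = Gf y := by
    intro y hy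
    rw [hpdG_sub i y hy, hpdL i j hij y hy, hAform i j hij y hy,
      if_pos rfl, if_neg (Ne.symm hij)]
    simp only [hGf]
    ring
  have hpdGj : ∀ y ∈ U, pd j Gf y = Gf y := by
    intro y hy
    rw [hpdG_sub j y hy, hpdLj i j hij y hy, hAform j i hij.symm y hy,
      if_neg hij, if_pos rfl]
    simp only [hGf]
    ring
  have hpdGk : ∀ y ∈ U, pd (other i j) Gf y = 0 := by
    intro y hy
    have hLk : pd (other i j) (fun z => len d i j z ^ 2) y = 0 := by
      rw [ECC.pd_sq (hlendiff i j hij y hy) (other i j),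
        hpdlen0 i j (other i j) hij hki hkj y hy]
      ring
    rw [hpdG_sub (other i j) y hy, hLk, if_neg (Ne.symm hki), if_neg (Ne.symm hkj)]
    ring
  set Hf : (Fin 3 → ℝ) → ℝ := fun y => Gf y * Ef y with hHf
  have hHdiff : ∀ y ∈ U, DifferentiableAt ℝ Hf y := by
    intro y hy; simp only [hHf]; exact (hGdiff y hy).mul (hEdiff y)
  have hpdE : ∀ (m : Fin 3) (y : Fin 3 → ℝ), pd m Ef y
      = Ef y * ((-1) * (if i = m then 1 else 0) + (-1) * (if j = m then 1 else 0)) := by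
    intro m y; simp only [hEf]; exact ECC.pd_explin (-1) (-1) i j m y
  have hpdH : ∀ (m : Fin 3), ∀ y ∈ U, pd m Hf y = 0 := by
    intro m y hy
    have hmul : pd m Hf y = pd m Gf y * Ef y + Gf y * pd m Ef y := by
      simp only [hHf]; exact ECC.pd_mul (hGdiff y hy) (hEdiff y) m
    rcases ECC.other_cover i j m hij with h | h | h
    · rw [hmul, h, hpdGi y hy, hpdE i y, if_pos rfl, if_neg (Ne.symm hij)]; ring
    · rw [hmul, h, hpdGj y hy, hpdE j y, if_neg hij, if_pos rfl]; ring
    · rw [hmul, h, hpdGk y hy, hpdE (other i j) y, if_neg (Ne.symm hki), if_neg (Ne.symm hkj)]; ring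
  have hHconst : Hf x = Hf p :=
    ECC.eq_on_box_of_pd_zero hIopen hIinterval hUbox hHdiff hpdH hx hp
  have hHp : Hf p = 2 * η i j := by
    simp only [hHf, hGf, hEf]
    simp only [hη]
    have hexp : Real.exp ((-1) * p i + (-1) * p j) = Real.exp (-(p i + p j)) := by
      congr 1; ring
    rw [hexp]; ring
  have hs1 : Real.exp (-(x i + x j)) * Real.exp (x i + x j) = 1 := by
    have h0 : -(x i + x j) + (x i + x j) = 0 := by ring
    rw [← Real.exp_add, h0, Real.exp_zero]
  have hGx : Gf x = 2 * η i j * Real.exp (x i + x j) := by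
    have hEx : Ef x = Real.exp (-(x i + x j)) := by
      simp only [hEf]; congr 1; ring
    have h1 : Gf x * Real.exp (-(x i + x j)) = 2 * η i j := by
      rw [← hEx]
      calc Gf x * Ef x = Hf x := by simp only [hHf]
        _ = Hf p := hHconst
        _ = 2 * η i j := hHp
    calc Gf x = Gf x * (Real.exp (-(x i + x j)) * Real.exp (x i + x j)) := by rw [hs1]; ring
      _ = (Gf x * Real.exp (-(x i + x j))) * Real.exp (x i + x j) := by ring
      _ = 2 * η i j * Real.exp (x i + x j) := by rw [h1]
  have hGx' : len d i j x ^ 2 - α i * Real.exp (2 * x i) - α j * Real.exp (2 * x j)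
      = 2 * η i j * Real.exp (x i + x j) := by
    rw [← hGx, hGf]
  constructor
  · linarith [hGx']
  · rw [eq_div_iff (ne_of_gt (hpos i j hij x hx))]
    have h1 : pd i (fun z => len d i j z ^ 2) x = 2 * len d i j x * d i j x := by
      rw [ECC.pd_sq (hlendiff i j hij x hx) i, hconf i j hij x hx]
    have heq : 2 * len d i j x * d i j x = len d i j x ^ 2 + Afun d i j x :=
      h1.symm.trans (hpdL i j hij x hx)
    have h3 := hAform i j hij x hx
    have hdl : 2 * len d i j x * d i j x
        = 2 * (α i * Real.exp (2 * x i)) + 2 * (η i j * Real.exp (x i + x j)) := by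
      linarith [heq, h3, hGx']
    nlinarith [hdl]
end
end
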